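/- Let p = 1 and suppose (U_k)_{k≥0} solves the coefficient recurrence (k² + ck − r + 2aU_0 + 3bU_0²) U_k = −a Σ_{i+j=k, i,j<k} U_i U_j − b Σ_{i+j+l=k, i,j,l<k} U_i U_j U_l for k ≥ 2, with U_0 = 0 and given U_1. If there exist C > 0 and k_0 such that |k² + ck − r| ≥ k²/2 for k ≥ k_0, then there exists M > 0 with |U_k| ≤ M^k for all k; consequently the series Σ U_k e^{kζ} converges absolutely for ζ < −log M. -/

import Mathlib

/-!
If ‖U i‖ ≤ A M^i for all i < k, then every term of the quadratic and of the cubic sum has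
total index k, hence norm at most A² M^k resp. A³ M^k, and there are at most (k + 1)² terms.
Since U 0 = 0 the coefficient of U k is k² + ck − r, of norm at least k²/2, so
‖U k‖ ≤ 2 (k + 1)² / k² · (‖a‖ + ‖b‖) A · A M^k ≤ (9/2) (‖a‖ + ‖b‖) A · A M^k for A ≤ 1 and k ≥ 2.
Choosing A small makes the bound propagate, and M large makes it hold below the threshold k₀.
-/

open Finset

section Convolution

variable {R : Type*} [SeminormedRing R] {U : ℕ → R} {A M : ℝ} {k : ℕ}

lemma norm_mul_le_mul_pow_add {x y : R} {B C : ℝ} {i j : ℕ}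
    (hx : ‖x‖ ≤ B * M ^ i) (hy : ‖y‖ ≤ C * M ^ j) : ‖x * y‖ ≤ B * C * M ^ (i + j) :=
  calc ‖x * y‖ ≤ ‖x‖ * ‖y‖ := norm_mul_le x y
    _ ≤ B * M ^ i * (C * M ^ j) := mul_le_mul hx hy (norm_nonneg y) ((norm_nonneg x).trans hx)
    _ = B * C * M ^ (i + j) := by ring

lemma norm_sum_antidiagonal_mul_le (hM : 0 ≤ M) (hU : ∀ i < k, ‖U i‖ ≤ A * M ^ i) :
    ‖∑ ij ∈ (antidiagonal k).filter (fun ij => ij.1 < k ∧ ij.2 < k), U ij.1 * U ij.2‖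
      ≤ (k + 1) * (A * A * M ^ k) := by
  have hterm : ∀ ij ∈ (antidiagonal k).filter (fun ij => ij.1 < k ∧ ij.2 < k),
      ‖U ij.1 * U ij.2‖ ≤ A * A * M ^ k := by
    simp only [mem_filter, HasAntidiagonal.mem_antidiagonal, and_imp]
    rintro ⟨i, j⟩ rfl hi hj
    exact norm_mul_le_mul_pow_add (hU i hi) (hU j hj)
  calc _ ≤ #((antidiagonal k).filter (fun ij => ij.1 < k ∧ ij.2 < k)) * (A * A * M ^ k) :=
        norm_sum_le_of_le _ hterm |>.trans (by rw [sum_const, nsmul_eq_mul])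
    _ ≤ (k + 1) * (A * A * M ^ k) := by
        gcongr
        · exact mul_nonneg (mul_self_nonneg A) (pow_nonneg hM k)
        · exact_mod_cast (card_filter_le _ _).trans (Nat.card_antidiagonal k).le

lemma norm_sum_antidiagonal_antidiagonal_mul_le (hA : 0 ≤ A) (hM : 0 ≤ M)
    (hU : ∀ i < k, ‖U i‖ ≤ A * M ^ i) :
    ‖∑ ij ∈ antidiagonal k, ∑ lm ∈ antidiagonal ij.2,
        (if ij.1 < k ∧ lm.1 < k ∧ lm.2 < k then U ij.1 * U lm.1 * U lm.2 else 0)‖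
      ≤ (k + 1) ^ 2 * (A * A * A * M ^ k) := by
  have hC : 0 ≤ A * A * A * M ^ k := by positivity
  have hterm : ∀ ij ∈ antidiagonal k, ∀ lm ∈ antidiagonal ij.2,
      ‖if ij.1 < k ∧ lm.1 < k ∧ lm.2 < k then U ij.1 * U lm.1 * U lm.2 else 0‖
        ≤ A * A * A * M ^ k := by
    rintro ⟨i, j⟩ hij ⟨l, m⟩ hlm
    simp only [HasAntidiagonal.mem_antidiagonal] at hij hlm
    split_ifs with h
    · obtain ⟨hi, hl, hm⟩ := h
      have := norm_mul_le_mul_pow_add (norm_mul_le_mul_pow_add (hU i hi) (hU l hl)) (hU m hm)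
      rwa [add_assoc, hlm, hij] at this
    · simpa using hC
  have hinner : ∀ ij ∈ antidiagonal k, ‖∑ lm ∈ antidiagonal ij.2,
      (if ij.1 < k ∧ lm.1 < k ∧ lm.2 < k then U ij.1 * U lm.1 * U lm.2 else 0)‖
        ≤ (k + 1) * (A * A * A * M ^ k) := by
    intro ij hij
    have hj : ij.2 ≤ k := HasAntidiagonal.antidiagonal.snd_le hij
    calc _ ≤ #(antidiagonal ij.2) * (A * A * A * M ^ k) :=
          norm_sum_le_of_le _ (hterm ij hij) |>.trans (by rw [sum_const, nsmul_eq_mul])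
      _ ≤ (k + 1) * (A * A * A * M ^ k) := by
          gcongr
          rw [Nat.card_antidiagonal]
          exact_mod_cast Nat.succ_le_succ hj
  calc _ ≤ #(antidiagonal k) * ((k + 1) * (A * A * A * M ^ k)) :=
        norm_sum_le_of_le _ hinner |>.trans (by rw [sum_const, nsmul_eq_mul])
    _ = (k + 1) ^ 2 * (A * A * A * M ^ k) := by
        rw [Nat.card_antidiagonal]; push_cast; ring

end Convolution

lemma norm_le_of_mul_eq_sub {𝕜 : Type*} [NormedDivisionRing 𝕜] {F u a b Q T : 𝕜} {A M : ℝ} {k : ℕ}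
    (hk : 2 ≤ k) (hF : (k : ℝ) ^ 2 / 2 ≤ ‖F‖) (hA : 0 ≤ A) (hA1 : A ≤ 1)
    (hAab : 9 * (‖a‖ + ‖b‖) * A ≤ 2) (hM : 0 ≤ M) (h : F * u = -a * Q - b * T)
    (hQ : ‖Q‖ ≤ (k + 1) * (A * A * M ^ k)) (hT : ‖T‖ ≤ (k + 1) ^ 2 * (A * A * A * M ^ k)) :
    ‖u‖ ≤ A * M ^ k := by
  have hk' : (2 : ℝ) ≤ k := by exact_mod_cast hk
  have hMk : 0 ≤ M ^ k := pow_nonneg hM k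
  have hsq : ((k : ℝ) + 1) ^ 2 ≤ 9 / 4 * k ^ 2 := by nlinarith
  have hFu : ‖F‖ * ‖u‖ ≤ (k ^ 2 / 2) * (A * M ^ k) := by
    rw [← norm_mul, h]
    calc ‖-a * Q - b * T‖ ≤ ‖a‖ * ‖Q‖ + ‖b‖ * ‖T‖ := by
          simpa only [norm_mul, norm_neg] using norm_sub_le (-a * Q) (b * T)
      _ ≤ ‖a‖ * ((k + 1) ^ 2 * (A * A * M ^ k)) + ‖b‖ * ((k + 1) ^ 2 * (A * A * M ^ k)) := by
          gcongr
          · exact hQ.trans (by gcongr; nlinarith)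
          · exact hT.trans (by gcongr; exact mul_le_of_le_one_right (by positivity) hA1)
      _ = (‖a‖ + ‖b‖) * A * ((k + 1) ^ 2 * (A * M ^ k)) := by ring
      _ ≤ 2 / 9 * (9 / 4 * k ^ 2 * (A * M ^ k)) := by gcongr; linarith
      _ = (k ^ 2 / 2) * (A * M ^ k) := by ring
  have hFpos : 0 < ‖F‖ := lt_of_lt_of_le (by positivity) hF
  exact le_of_mul_le_mul_left (hFu.trans (by gcongr)) hFpos

lemma exists_pos_le_one_mul_le {s c : ℝ} (hs : 0 ≤ s) (hc : 0 < c) :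
    ∃ A : ℝ, 0 < A ∧ A ≤ 1 ∧ s * A ≤ c := by
  refine ⟨c / (s + c), by positivity, (div_le_one (by positivity)).mpr (by linarith), ?_⟩
  rw [mul_div_assoc', div_le_iff₀ (by positivity)]
  nlinarith

lemma exists_norm_le_mul_pow_of_lt {E : Type*} [SeminormedAddCommGroup E] (U : ℕ → E) {A : ℝ}
    (hA : 0 < A) (N : ℕ) : ∃ M, 1 ≤ M ∧ ∀ k < N, 1 ≤ k → ‖U k‖ ≤ A * M ^ k := by
  set M := 1 + ∑ i ∈ range N, ‖U i‖ / A
  have hM : 1 ≤ M := le_add_of_nonneg_right (by positivity)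
  refine ⟨M, hM, fun k hk hk1 => ?_⟩
  have hle : ‖U k‖ / A ≤ M :=
    (single_le_sum (f := fun i => ‖U i‖ / A) (fun i _ => by positivity)
      (mem_range.mpr hk)).trans (le_add_of_nonneg_left zero_le_one)
  calc ‖U k‖ ≤ A * M := (div_le_iff₀' hA).mp hle
    _ ≤ A * M ^ k := by gcongr; exact le_self_pow₀ hM (by omega)

lemma summable_norm_mul_exp_of_norm_le_pow {U : ℕ → ℂ} {M ζ : ℝ} (hM : 0 < M)
    (hU : ∀ k, ‖U k‖ ≤ M ^ k) (hζ : ζ < -Real.log M) :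
    Summable fun k : ℕ => ‖U k * Complex.exp (k * ζ)‖ := by
  have hq : M * Real.exp ζ < 1 := by
    rw [← Real.exp_log hM, ← Real.exp_add, Real.exp_lt_one_iff]
    linarith
  refine Summable.of_nonneg_of_le (fun k => norm_nonneg _) (fun k => ?_)
    (summable_geometric_of_lt_one (by positivity) hq)
  calc ‖U k * Complex.exp (k * ζ)‖ = ‖U k‖ * Real.exp ζ ^ k := by
        rw [norm_mul, Complex.norm_exp, ← Real.exp_nat_mul]; norm_cast
    _ ≤ M ^ k * Real.exp ζ ^ k := by gcongr; exact hU k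
    _ = (M * Real.exp ζ) ^ k := (mul_pow _ _ _).symm

theorem cbkdv_recurrence_geometric_bound
    (a b c r : ℂ) (Uc : ℕ → ℂ) (hU0 : Uc 0 = 0)
    (hrec : ∀ k : ℕ, 2 ≤ k →
      ((k : ℂ) ^ 2 + c * k - r + 2 * a * Uc 0 + 3 * b * (Uc 0) ^ 2) * Uc k =
        -a * ∑ ij ∈ (Finset.HasAntidiagonal.antidiagonal k).filter (fun ij => ij.1 < k ∧ ij.2 < k),
            Uc ij.1 * Uc ij.2
        - b * ∑ ij ∈ Finset.HasAntidiagonal.antidiagonal k, ∑ lm ∈ Finset.HasAntidiagonal.antidiagonal ij.2,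
            (if ij.1 < k ∧ lm.1 < k ∧ lm.2 < k then Uc ij.1 * Uc lm.1 * Uc lm.2 else 0))
    (hgrowth : ∃ k0 : ℕ, ∀ k : ℕ, k0 ≤ k →
      (k : ℝ) ^ 2 / 2 ≤ ‖(k : ℂ) ^ 2 + c * k - r‖) :
    ∃ M : ℝ, 0 < M ∧ (∀ k : ℕ, ‖Uc k‖ ≤ M ^ k) ∧
      ∀ ζ : ℝ, ζ < -Real.log M →
        Summable (fun k : ℕ => ‖Uc k * Complex.exp (k * ζ)‖) := by
  obtain ⟨k0, hk0⟩ := hgrowth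
  obtain ⟨A, hApos, hA1, hAab⟩ :=
    exists_pos_le_one_mul_le (by positivity : 0 ≤ 9 * (‖a‖ + ‖b‖)) two_pos
  obtain ⟨M, hM1, hinit⟩ := exists_norm_le_mul_pow_of_lt Uc hApos (max k0 2)
  have hM : 0 ≤ M := zero_le_one.trans hM1
  have hbound : ∀ k, ‖Uc k‖ ≤ A * M ^ k := by
    intro k
    induction k using Nat.strong_induction_on with
    | _ k ih =>
      rcases Nat.eq_zero_or_pos k with rfl | hk1
      · simpa [hU0] using hApos.le
      rcases lt_or_ge k (max k0 2) with hkN | hkN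
      · exact hinit k hkN hk1
      have hk2 : 2 ≤ k := (le_max_right k0 2).trans hkN
      have hstep := hrec k hk2
      rw [hU0, mul_zero, add_zero, zero_pow two_ne_zero, mul_zero, add_zero] at hstep
      exact norm_le_of_mul_eq_sub hk2 (hk0 k ((le_max_left k0 2).trans hkN)) hApos.le hA1 hAab hM
        hstep (norm_sum_antidiagonal_mul_le hM ih)
        (norm_sum_antidiagonal_antidiagonal_mul_le hApos.le hM ih)
  have hpow : ∀ k, ‖Uc k‖ ≤ M ^ k := fun k =>
    (hbound k).trans (mul_le_of_le_one_left (pow_nonneg hM k) hA1)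
  have hMpos : 0 < M := zero_lt_one.trans_le hM1
  exact ⟨M, hMpos, hpow, fun ζ hζ => summable_norm_mul_exp_of_norm_le_pow hMpos hpow hζ⟩
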